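/- Consider a feed-forward simply layered binary neural network with L layers, where layer ℓ consists of n_ℓ neurons, each neuron's binary output is flipped independently with probability ξ (0 ≤ ξ < 1/2), and each layer's pre-noise output is a deterministic function of the previous layer's post-noise output. Let X be any finitely-supported random input (or subset of the input) and Y_out the network output. Then I(X; Y_out) ≤ Π_{ℓ=1}^L (1 - (4ξ - 4ξ^2)^{n_ℓ}) · H(X). -/

import Mathlib

open Finset

/-- Shannon entropy (natural logarithm) of a finitely-supported distribution. -/
noncomputable def ent {α : Type*} [Fintype α] (p : α → ℝ) : ℝ :=
  -∑ x, p x * Real.log (p x)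

/-- Mutual information of a joint distribution on a finite product space. -/
noncomputable def mutInfo {α β : Type*} [Fintype α] [Fintype β] (p : α × β → ℝ) : ℝ :=
  ent (fun x => ∑ y, p (x, y)) + ent (fun y => ∑ x, p (x, y)) - ent p

/-- Transition probability of `n` independent BSC(ξ) channels. -/
noncomputable def bscChannel (ξ : ℝ) {n : ℕ} (y z : Fin n → Bool) : ℝ :=
  ξ ^ (hammingDist y z) * (1 - ξ) ^ (n - hammingDist y z)

/-- Pre-noise activation of layer `ℓ` in a simply layered network: a deterministic
function of the network input (for the first layer) or of the previous layer's
post-noise output. -/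
def preAct {α : Type*} (n : ℕ → ℕ) (f0 : α → (Fin (n 0) → Bool))
    (f : ∀ k : ℕ, (Fin (n k) → Bool) → (Fin (n (k + 1)) → Bool))
    {L : ℕ} (x : α) (y : ∀ ℓ : Fin L, Fin (n ℓ.val) → Bool)
    (ℓ : Fin L) : Fin (n ℓ.val) → Bool :=
  match ℓ with
  | ⟨0, _⟩ => f0 x
  | ⟨k + 1, h⟩ => f k (y ⟨k, Nat.lt_of_succ_lt h⟩)

/-!
Each noisy layer contracts mutual information by the factor `1 - (4ξ - 4ξ²)^m` of Evans and
Schulman. On a single wire, `I(X; BSC(Z)) ≤ (1 - 2ξ)² I(X; Z)`: the mutual information of a binary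
output is expressed through the perspective `(u, v) ↦ (u + v) h(v / (u + v))` of the binary
entropy `h`, and `t ↦ h(ξ + (1 - 2ξ) t) - (1 - 2ξ)² h(t)` is convex, so its perspective is
subadditive. The same bound holds conditionally on the other wires, and the chain rule
`I(X; Y₁, W) = I(X; W) + I(X; Y₁ | W)` turns it into the bound for `m` wires by induction on `m`.
The deterministic maps between layers only lose information (data processing), and the first
layer starts from `I(X; X) ≤ H(X)`.
-/

open Real

section Entropy

variable {α β γ : Type*}

def fstMarginal [Fintype β] (p : α × β → ℝ) (x : α) : ℝ := ∑ y, p (x, y)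

def sndMarginal [Fintype α] (p : α × β → ℝ) (y : β) : ℝ := ∑ x, p (x, y)

lemma le_fstMarginal [Fintype β] {p : α × β → ℝ} (hp : ∀ z, 0 ≤ p z) (x : α) (y : β) :
    p (x, y) ≤ fstMarginal p x :=
  Finset.single_le_sum (fun y _ => hp (x, y)) (Finset.mem_univ y)

lemma le_sndMarginal [Fintype α] {p : α × β → ℝ} (hp : ∀ z, 0 ≤ p z) (x : α) (y : β) :
    p (x, y) ≤ sndMarginal p y :=
  Finset.single_le_sum (fun x _ => hp (x, y)) (Finset.mem_univ x)

def diagJoint [DecidableEq α] (μ : α → ℝ) : α × α → ℝ :=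
  fun xx => if xx.1 = xx.2 then μ xx.1 else 0

lemma diagJoint_nonneg [DecidableEq α] {μ : α → ℝ} (hμ : ∀ x, 0 ≤ μ x) (z : α × α) :
    0 ≤ diagJoint μ z := by
  unfold diagJoint
  split_ifs <;> simp [hμ]

variable [Fintype α] [Fintype β] [Fintype γ]

lemma mutInfo_eq_ent (p : α × β → ℝ) :
    mutInfo p = ent (fstMarginal p) + ent (sndMarginal p) - ent p := rfl

lemma ent_eq_sum_negMulLog (p : α → ℝ) : ent p = ∑ x, negMulLog (p x) := by
  simp [ent, negMulLog, Finset.sum_neg_distrib]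

lemma ent_comp_equiv (e : β ≃ α) (p : α → ℝ) : ent (fun x => p (e x)) = ent p := by
  simp only [ent_eq_sum_negMulLog]
  exact e.sum_comp (fun x => negMulLog (p x))

lemma mutInfo_comp_equiv (e : γ ≃ β) (p : α × β → ℝ) :
    mutInfo (fun xz : α × γ => p (xz.1, e xz.2)) = mutInfo p := by
  have hX (x : α) : ∑ z, p (x, e z) = ∑ y, p (x, y) := e.sum_comp fun y => p (x, y)
  simp only [mutInfo, hX, ent_comp_equiv e (fun y => ∑ x, p (x, y))]
  rw [← ent_comp_equiv ((Equiv.refl α).prodCongr e) p]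
  rfl

lemma mutInfo_of_unique [Unique β] (p : α × β → ℝ) (hp : ∑ z, p z = 1) :
    mutInfo p = 0 := by
  simp only [Fintype.sum_prod_type, Fintype.sum_unique] at hp
  simp [mutInfo, ent_eq_sum_negMulLog, Fintype.sum_prod_type, hp]

lemma negMulLog_sum_le (g : α → ℝ) (hg : ∀ x, 0 ≤ g x) :
    negMulLog (∑ x, g x) ≤ ∑ x, negMulLog (g x) := by
  simp only [negMulLog, neg_mul, Finset.sum_neg_distrib, Finset.sum_mul, neg_le_neg_iff]
  refine Finset.sum_le_sum fun x _ => ?_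
  rcases (hg x).eq_or_lt with h | h
  · simp [← h]
  · exact mul_le_mul_of_nonneg_left
      (log_le_log h (Finset.single_le_sum (fun i _ => hg i) (Finset.mem_univ x))) h.le

lemma mutInfo_le_ent (p : α × β → ℝ) (hp : ∀ z, 0 ≤ p z) : mutInfo p ≤ ent (fstMarginal p) := by
  have h : ent (sndMarginal p) ≤ ent p := by
    rw [ent_eq_sum_negMulLog, ent_eq_sum_negMulLog, Fintype.sum_prod_type, Finset.sum_comm]
    exact Finset.sum_le_sum fun y _ => negMulLog_sum_le _ fun x => hp (x, y)
  rw [mutInfo_eq_ent]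
  linarith

lemma sum_diagJoint [DecidableEq α] (μ : α → ℝ) : ∑ z, diagJoint μ z = ∑ x, μ x := by
  simp [diagJoint, Fintype.sum_prod_type]

lemma mutInfo_diagJoint_le [DecidableEq α] {μ : α → ℝ} (hμ : ∀ x, 0 ≤ μ x) :
    mutInfo (diagJoint μ) ≤ ent μ := by
  have hfst : fstMarginal (diagJoint μ) = μ := by
    funext x
    simp [fstMarginal, diagJoint]
  simpa [hfst] using mutInfo_le_ent (diagJoint μ) (diagJoint_nonneg hμ)

end Entropy

section Channel

variable {α β γ δ : Type*}

/-- The joint law of `X` and `K(Y)`, where `p` is the joint law of `X` and `Y`. -/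
def applyChannel [Fintype β] (p : α × β → ℝ) (K : β → γ → ℝ) : α × γ → ℝ :=
  fun xc => ∑ b, p (xc.1, b) * K b xc.2

structure IsStochastic [Fintype γ] (K : β → γ → ℝ) : Prop where
  nonneg : ∀ b c, 0 ≤ K b c
  sum_eq_one : ∀ b, ∑ c, K b c = 1

def detKernel [DecidableEq γ] (g : β → γ) : β → γ → ℝ := fun b c => if g b = c then 1 else 0

lemma isStochastic_detKernel [Fintype γ] [DecidableEq γ] (g : β → γ) :
    IsStochastic (detKernel g) where
  nonneg b c := by unfold detKernel; split_ifs <;> norm_num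
  sum_eq_one b := by simp [detKernel]

lemma IsStochastic.comp [Fintype γ] {K : β → γ → ℝ} (hK : IsStochastic K) (g : δ → β) :
    IsStochastic fun d => K (g d) :=
  ⟨fun _ _ => hK.nonneg _ _, fun _ => hK.sum_eq_one _⟩

lemma applyChannel_nonneg [Fintype β] [Fintype γ] {p : α × β → ℝ} (hp : ∀ z, 0 ≤ p z)
    {K : β → γ → ℝ} (hK : IsStochastic K) (z : α × γ) : 0 ≤ applyChannel p K z :=
  Finset.sum_nonneg fun _ _ => mul_nonneg (hp _) (hK.nonneg _ _)

lemma fstMarginal_applyChannel [Fintype β] [Fintype γ] (p : α × β → ℝ) {K : β → γ → ℝ}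
    (hK : IsStochastic K) : fstMarginal (applyChannel p K) = fstMarginal p := by
  funext x
  simp only [fstMarginal, applyChannel]
  rw [Finset.sum_comm]
  simp [← Finset.mul_sum, hK.sum_eq_one]

lemma sndMarginal_applyChannel [Fintype α] [Fintype β] (p : α × β → ℝ) (K : β → γ → ℝ) (c : γ) :
    sndMarginal (applyChannel p K) c = ∑ b, sndMarginal p b * K b c := by
  simp only [sndMarginal, applyChannel, Finset.sum_mul]
  exact Finset.sum_comm

lemma sum_applyChannel [Fintype α] [Fintype β] [Fintype γ] (p : α × β → ℝ) {K : β → γ → ℝ}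
    (hK : IsStochastic K) : ∑ z, applyChannel p K z = ∑ z, p z :=
  calc ∑ z, applyChannel p K z = ∑ x, fstMarginal (applyChannel p K) x :=
        Fintype.sum_prod_type _
    _ = ∑ z, p z := by rw [fstMarginal_applyChannel p hK]; exact (Fintype.sum_prod_type _).symm

lemma applyChannel_applyChannel_detKernel [Fintype β] [Fintype γ] [DecidableEq γ]
    (p : α × β → ℝ) (g : β → γ) (K : γ → δ → ℝ) :
    applyChannel (applyChannel p (detKernel g)) K = applyChannel p (fun b => K (g b)) := by
  funext xd
  simp [applyChannel, detKernel, Finset.sum_mul, Finset.sum_comm (γ := γ)]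

lemma sub_le_mul_log_sub_log {a b : ℝ} (ha : 0 ≤ a) (hb : 0 ≤ b) (hab : b = 0 → a = 0) :
    a - b ≤ a * (log a - log b) := by
  rcases ha.eq_or_lt with rfl | ha'
  · simpa using hb
  have hb' : 0 < b := hb.lt_of_ne fun h => ha'.ne' (hab h.symm)
  have h := self_sub_one_le_mul_log (div_nonneg ha hb)
  rw [log_div ha'.ne' hb'.ne'] at h
  calc a - b = b * (a / b - 1) := by field_simp
    _ ≤ b * (a / b * (log a - log b)) := by gcongr
    _ = a * (log a - log b) := by field_simp

/-- The log-sum inequality. -/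
lemma sum_mul_log_sub_log_le {ι : Type*} [Fintype ι] (a b : ι → ℝ) (ha : ∀ i, 0 ≤ a i)
    (hb : ∀ i, 0 ≤ b i) (hab : ∀ i, b i = 0 → a i = 0) :
    (∑ i, a i) * (log (∑ i, a i) - log (∑ i, b i)) ≤ ∑ i, a i * (log (a i) - log (b i)) := by
  set A := ∑ i, a i
  set B := ∑ i, b i
  rcases (show 0 ≤ A from Finset.sum_nonneg fun i _ => ha i).eq_or_lt with hA | hA
  · have ha0 := (Finset.sum_eq_zero_iff_of_nonneg fun i _ => ha i).1 hA.symm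
    rw [← hA]
    simp [ha0]
  have hB : 0 < B := (Finset.sum_nonneg fun i _ => hb i).lt_of_ne fun h => hA.ne' <|
    Finset.sum_eq_zero fun i _ => hab i ((Finset.sum_eq_zero_iff_of_nonneg fun i _ => hb i).1
      h.symm i (Finset.mem_univ i))
  have key (i : ι) :
      a i - b i * (A / B) ≤ a i * (log (a i) - log (b i)) - a i * (log A - log B) := by
    rcases (hb i).eq_or_lt with h | h
    · simp [hab i h.symm, ← h]
    have := sub_le_mul_log_sub_log (ha i) (by positivity : 0 ≤ b i * (A / B))
      fun h' => absurd h' (by positivity)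
    rw [log_mul h.ne' (by positivity), log_div hA.ne' hB.ne'] at this
    linarith
  have hsum := Finset.sum_le_sum fun i (_ : i ∈ Finset.univ) => key i
  rw [Finset.sum_sub_distrib, Finset.sum_sub_distrib, ← Finset.sum_mul, ← Finset.sum_mul,
    mul_div_cancel₀ A hB.ne'] at hsum
  linarith

lemma mutInfo_eq_sum_mul_log [Fintype α] [Fintype β] (p : α × β → ℝ) (hp : ∀ z, 0 ≤ p z) :
    mutInfo p = ∑ z, p z * (log (p z) - log (fstMarginal p z.1 * sndMarginal p z.2)) := by
  have hterm (z : α × β) : p z * (log (p z) - log (fstMarginal p z.1 * sndMarginal p z.2))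
      = p z * log (p z) - p z * log (fstMarginal p z.1) - p z * log (sndMarginal p z.2) := by
    rcases (hp z).eq_or_lt with h | h
    · simp [← h]
    rw [log_mul (h.trans_le (le_fstMarginal hp z.1 z.2)).ne'
      (h.trans_le (le_sndMarginal hp z.1 z.2)).ne']
    ring
  have hfst : ∑ z : α × β, p z * log (fstMarginal p z.1)
      = ∑ x, fstMarginal p x * log (fstMarginal p x) := by
    simp only [Fintype.sum_prod_type, fstMarginal, Finset.sum_mul]
  have hsnd : ∑ z : α × β, p z * log (sndMarginal p z.2)
      = ∑ y, sndMarginal p y * log (sndMarginal p y) := by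
    simp only [Fintype.sum_prod_type, sndMarginal, Finset.sum_mul]
    exact Finset.sum_comm
  simp only [hterm, Finset.sum_sub_distrib, hfst, hsnd, mutInfo_eq_ent, ent]
  ring

lemma applyChannel_mul_log_sub_log_le [Fintype α] [Fintype β] {p : α × β → ℝ}
    (hp : ∀ z, 0 ≤ p z) {K : β → γ → ℝ} (hK : ∀ b c, 0 ≤ K b c) (x : α) (c : γ) :
    applyChannel p K (x, c) * (log (applyChannel p K (x, c))
        - log (fstMarginal p x * sndMarginal (applyChannel p K) c))
      ≤ ∑ b, K b c * (p (x, b) * (log (p (x, b)) - log (fstMarginal p x * sndMarginal p b))) := by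
  have hterm (b : β) :
      p (x, b) * K b c * (log (p (x, b) * K b c) - log (fstMarginal p x * sndMarginal p b * K b c))
        = K b c * (p (x, b) * (log (p (x, b)) - log (fstMarginal p x * sndMarginal p b))) := by
    rcases (hp (x, b)).eq_or_lt with h | h
    · simp [← h]
    rcases (hK b c).eq_or_lt with hk | hk
    · simp [← hk]
    rw [log_mul h.ne' hk.ne',
      log_mul (by nlinarith [le_fstMarginal hp x b, le_sndMarginal hp x b]) hk.ne']
    ring
  have hsum : ∑ b, fstMarginal p x * sndMarginal p b * K b c
      = fstMarginal p x * sndMarginal (applyChannel p K) c := by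
    simp only [sndMarginal_applyChannel, mul_assoc, Finset.mul_sum]
  have h := sum_mul_log_sub_log_le (fun b => p (x, b) * K b c)
    (fun b => fstMarginal p x * sndMarginal p b * K b c) (fun b => mul_nonneg (hp _) (hK b c))
    (fun b => mul_nonneg (mul_nonneg ((hp _).trans (le_fstMarginal hp x b))
      ((hp _).trans (le_sndMarginal hp x b))) (hK b c))
    fun b h0 => by
      rcases mul_eq_zero.1 h0 with h0 | h0
      · rcases mul_eq_zero.1 h0 with h0 | h0
        · simp [le_antisymm (h0 ▸ le_fstMarginal hp x b) (hp _)]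
        · simp [le_antisymm (h0 ▸ le_sndMarginal hp x b) (hp _)]
      · simp [h0]
  rwa [hsum, Finset.sum_congr rfl fun b _ => hterm b] at h

theorem mutInfo_applyChannel_le [Fintype α] [Fintype β] [Fintype γ] (p : α × β → ℝ)
    (hp : ∀ z, 0 ≤ p z) {K : β → γ → ℝ} (hK : IsStochastic K) :
    mutInfo (applyChannel p K) ≤ mutInfo p := by
  rw [mutInfo_eq_sum_mul_log _ (applyChannel_nonneg hp hK), mutInfo_eq_sum_mul_log p hp,
    fstMarginal_applyChannel p hK]
  calc _ ≤ ∑ z : α × γ, ∑ b, K b z.2 * (p (z.1, b)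
          * (log (p (z.1, b)) - log (fstMarginal p z.1 * sndMarginal p b))) :=
        Finset.sum_le_sum fun z _ => applyChannel_mul_log_sub_log_le hp hK.nonneg z.1 z.2
    _ = _ := by
      simp only [Fintype.sum_prod_type]
      refine Finset.sum_congr rfl fun x _ => ?_
      rw [Finset.sum_comm]
      simp [← Finset.sum_mul, hK.sum_eq_one]

end Channel

section OutputPair

variable {α β γ δ : Type*}

/-- The joint law of `X` and `W`, where `p` is the joint law of `X` and `(Z, W)`. -/
def outSndMarginal [Fintype γ] (p : α × γ × β → ℝ) : α × β → ℝ := fun xw => ∑ z, p (xw.1, z, xw.2)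

def applyChannelFst [Fintype γ] (p : α × γ × β → ℝ) (K : γ → δ → ℝ) : α × δ × β → ℝ :=
  fun xdw => ∑ c, p (xdw.1, c, xdw.2.2) * K c xdw.2.1

def applyChannelSnd [Fintype β] (p : α × γ × β → ℝ) (K : β → δ → ℝ) : α × γ × δ → ℝ :=
  fun xzd => ∑ b, p (xzd.1, xzd.2.1, b) * K b xzd.2.2

/-- `weightedMutInfo q` is `(∑ q) · I(X; Z)` for the normalisation of `q`; summed over the slices
`W = w` of a joint law of `X` and `(Z, W)`, it is the conditional mutual information
`I(X; Z | W)`. -/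
noncomputable def weightedMutInfo [Fintype α] [Fintype γ] (q : α × γ → ℝ) : ℝ :=
  mutInfo q - negMulLog (∑ z, q z)

lemma outSndMarginal_eq_applyChannel [Fintype β] [Fintype γ] [DecidableEq β] (p : α × γ × β → ℝ) :
    outSndMarginal p = applyChannel p (detKernel Prod.snd) := by
  funext xw
  simp [outSndMarginal, applyChannel, detKernel, Fintype.sum_prod_type]

lemma mutInfo_outSndMarginal_le [Fintype α] [Fintype β] [Fintype γ] (p : α × γ × β → ℝ)
    (hp : ∀ z, 0 ≤ p z) :
    mutInfo (outSndMarginal p) ≤ mutInfo p := by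
  classical
  rw [outSndMarginal_eq_applyChannel]
  exact mutInfo_applyChannel_le p hp (isStochastic_detKernel _)

lemma sum_outSndMarginal [Fintype α] [Fintype β] [Fintype γ] (p : α × γ × β → ℝ) :
    ∑ z, outSndMarginal p z = ∑ z, p z := by
  classical
  rw [outSndMarginal_eq_applyChannel, sum_applyChannel p (isStochastic_detKernel _)]

lemma applyChannelSnd_nonneg [Fintype β] [Fintype δ] {p : α × γ × β → ℝ} (hp : ∀ z, 0 ≤ p z)
    {K : β → δ → ℝ} (hK : IsStochastic K) (z : α × γ × δ) : 0 ≤ applyChannelSnd p K z :=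
  Finset.sum_nonneg fun _ _ => mul_nonneg (hp _) (hK.nonneg _ _)

lemma mutInfo_applyChannelSnd_le [Fintype α] [Fintype β] [Fintype γ] [Fintype δ]
    (p : α × γ × β → ℝ) (hp : ∀ z, 0 ≤ p z) {K : β → δ → ℝ} (hK : IsStochastic K) :
    mutInfo (applyChannelSnd p K) ≤ mutInfo p := by
  classical
  let K' : γ × β → γ × δ → ℝ := fun zb zd => if zb.1 = zd.1 then K zb.2 zd.2 else 0
  have hK' : IsStochastic K' :=
    ⟨fun zb zd => by simp only [K']; split_ifs <;> simp [hK.nonneg],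
      fun zb => by simp [K', Fintype.sum_prod_type, hK.sum_eq_one]⟩
  have h : applyChannelSnd p K = applyChannel p K' := by
    funext xzd
    simp [applyChannelSnd, applyChannel, K', Fintype.sum_prod_type]
  rw [h]
  exact mutInfo_applyChannel_le p hp hK'

lemma outSndMarginal_applyChannelSnd [Fintype β] [Fintype γ] (p : α × γ × β → ℝ) (K : β → δ → ℝ) :
    outSndMarginal (applyChannelSnd p K) = applyChannel (outSndMarginal p) K := by
  funext xd
  simp only [outSndMarginal, applyChannelSnd, applyChannel, Finset.sum_mul]
  exact Finset.sum_comm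

lemma outSndMarginal_applyChannelFst [Fintype γ] [Fintype δ] (p : α × γ × β → ℝ) {K : γ → δ → ℝ}
    (hK : IsStochastic K) : outSndMarginal (applyChannelFst p K) = outSndMarginal p := by
  funext xw
  simp only [outSndMarginal, applyChannelFst]
  rw [Finset.sum_comm]
  simp [← Finset.mul_sum, hK.sum_eq_one]

/-- The chain rule `I(X; Z, W) = I(X; W) + I(X; Z | W)`. -/
theorem mutInfo_sub_mutInfo_outSndMarginal [Fintype α] [Fintype β] [Fintype γ] (p : α × γ × β → ℝ) :
    mutInfo p - mutInfo (outSndMarginal p)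
      = ∑ w, weightedMutInfo (fun xz : α × γ => p (xz.1, xz.2, w)) := by
  have hX (x : α) : ∑ zw : γ × β, p (x, zw) = ∑ w, ∑ z, p (x, z, w) := by
    rw [Fintype.sum_prod_type, Finset.sum_comm]
  have hZW : ∑ zw : γ × β, negMulLog (∑ x, p (x, zw))
      = ∑ w, ∑ z, negMulLog (∑ x, p (x, z, w)) := by
    rw [Fintype.sum_prod_type, Finset.sum_comm]
  have hXZW : ∑ xzw : α × γ × β, negMulLog (p xzw)
      = ∑ w, ∑ xz : α × γ, negMulLog (p (xz.1, xz.2, w)) := by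
    simp only [Fintype.sum_prod_type]
    exact (Finset.sum_congr rfl fun x _ => Finset.sum_comm).trans Finset.sum_comm
  have hXW : ∑ xw : α × β, negMulLog (∑ z, p (xw.1, z, xw.2))
      = ∑ w, ∑ x, negMulLog (∑ z, p (x, z, w)) := by
    rw [Fintype.sum_prod_type, Finset.sum_comm]
  have hW (w : β) : ∑ x, ∑ z, p (x, z, w) = ∑ xz : α × γ, p (xz.1, xz.2, w) :=
    (Fintype.sum_prod_type fun xz : α × γ => p (xz.1, xz.2, w)).symm
  simp only [weightedMutInfo, mutInfo, outSndMarginal, ent_eq_sum_negMulLog, hX, hZW, hXZW, hXW, hW,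
    Fintype.sum_prod_type (f := fun xz : α × γ => negMulLog (p (xz.1, xz.2, _))),
    Finset.sum_sub_distrib, Finset.sum_add_distrib]
  ring

end OutputPair

section BinarySymmetricChannel

noncomputable def perspective (φ : ℝ → ℝ) (u v : ℝ) : ℝ := (u + v) * φ (v / (u + v))

lemma perspective_zero (φ : ℝ → ℝ) : perspective φ 0 0 = 0 := by simp [perspective]

lemma perspective_add_le {φ : ℝ → ℝ} (hφ : ConvexOn ℝ (Set.Icc 0 1) φ) {u₁ v₁ u₂ v₂ : ℝ}
    (hu₁ : 0 ≤ u₁) (hv₁ : 0 ≤ v₁) (hu₂ : 0 ≤ u₂) (hv₂ : 0 ≤ v₂) :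
    perspective φ (u₁ + u₂) (v₁ + v₂) ≤ perspective φ u₁ v₁ + perspective φ u₂ v₂ := by
  rcases (add_nonneg hu₁ hv₁).eq_or_lt with h₁ | h₁
  · obtain ⟨rfl, rfl⟩ : u₁ = 0 ∧ v₁ = 0 := ⟨by linarith, by linarith⟩
    simp [perspective_zero]
  rcases (add_nonneg hu₂ hv₂).eq_or_lt with h₂ | h₂
  · obtain ⟨rfl, rfl⟩ : u₂ = 0 ∧ v₂ = 0 := ⟨by linarith, by linarith⟩
    simp [perspective_zero]
  have hmem {u v : ℝ} (hu : 0 ≤ u) (hv : 0 ≤ v) (h : 0 < u + v) : v / (u + v) ∈ Set.Icc 0 1 :=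
    ⟨by positivity, (div_le_one h).2 (by linarith)⟩
  have hS : 0 < u₁ + u₂ + (v₁ + v₂) := by linarith
  have hconv := hφ.2 (hmem hu₁ hv₁ h₁) (hmem hu₂ hv₂ h₂)
    (div_nonneg h₁.le hS.le) (div_nonneg h₂.le hS.le)
    (by rw [← add_div, div_eq_one_iff_eq hS.ne']; ring)
  have harg : (u₁ + v₁) / (u₁ + u₂ + (v₁ + v₂)) * (v₁ / (u₁ + v₁))
      + (u₂ + v₂) / (u₁ + u₂ + (v₁ + v₂)) * (v₂ / (u₂ + v₂))
        = (v₁ + v₂) / (u₁ + u₂ + (v₁ + v₂)) := by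
    field_simp
  simp only [smul_eq_mul, harg] at hconv
  unfold perspective
  calc (u₁ + u₂ + (v₁ + v₂)) * φ ((v₁ + v₂) / (u₁ + u₂ + (v₁ + v₂)))
      ≤ (u₁ + u₂ + (v₁ + v₂)) * ((u₁ + v₁) / (u₁ + u₂ + (v₁ + v₂)) * φ (v₁ / (u₁ + v₁))
        + (u₂ + v₂) / (u₁ + u₂ + (v₁ + v₂)) * φ (v₂ / (u₂ + v₂))) := by gcongr
    _ = (u₁ + v₁) * φ (v₁ / (u₁ + v₁)) + (u₂ + v₂) * φ (v₂ / (u₂ + v₂)) := by field_simp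

lemma perspective_sum_le {ι : Type*} {φ : ℝ → ℝ} (hφ : ConvexOn ℝ (Set.Icc 0 1) φ)
    (s : Finset ι) {u v : ι → ℝ} (hu : ∀ i, 0 ≤ u i) (hv : ∀ i, 0 ≤ v i) :
    perspective φ (∑ i ∈ s, u i) (∑ i ∈ s, v i) ≤ ∑ i ∈ s, perspective φ (u i) (v i) := by
  induction s using Finset.cons_induction with
  | empty => simp [perspective_zero]
  | cons i s hi ih =>
    simp only [Finset.sum_cons]
    exact (perspective_add_le hφ (hu i) (hv i) (Finset.sum_nonneg fun j _ => hu j)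
      (Finset.sum_nonneg fun j _ => hv j)).trans (add_le_add le_rfl ih)

lemma perspective_binEntropy {u v : ℝ} (hu : 0 ≤ u) (hv : 0 ≤ v) :
    perspective binEntropy u v = negMulLog u + negMulLog v - negMulLog (u + v) := by
  rcases (add_nonneg hu hv).eq_or_lt with h | h
  · obtain ⟨rfl, rfl⟩ : u = 0 ∧ v = 0 := ⟨by linarith, by linarith⟩
    simp [perspective_zero]
  have hsplit {w : ℝ} : negMulLog w = w / (u + v) * negMulLog (u + v)
      + (u + v) * negMulLog (w / (u + v)) := by
    rw [← negMulLog_mul, mul_div_cancel₀ w h.ne']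
  have hu' : 1 - v / (u + v) = u / (u + v) := by field_simp; ring
  have hmass : u / (u + v) * negMulLog (u + v) + v / (u + v) * negMulLog (u + v)
      = negMulLog (u + v) := by field_simp
  rw [perspective, binEntropy_eq_negMulLog_add_negMulLog_one_sub, hu', hsplit (w := u),
    hsplit (w := v)]
  linarith

lemma perspective_bsc (φ : ℝ → ℝ) (ξ u v : ℝ) :
    perspective φ ((1 - ξ) * u + ξ * v) (ξ * u + (1 - ξ) * v)
      = perspective (fun t => φ (ξ + (1 - 2 * ξ) * t)) u v := by
  unfold perspective
  rw [show (1 - ξ) * u + ξ * v + (ξ * u + (1 - ξ) * v) = u + v by ring]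
  rcases eq_or_ne (u + v) 0 with h | h
  · simp [h]
  congr 2
  field_simp
  ring

noncomputable def bscBit (ξ : ℝ) (c b : Bool) : ℝ := if c = b then 1 - ξ else ξ

lemma isStochastic_bscBit {ξ : ℝ} (hξ0 : 0 ≤ ξ) (hξ1 : ξ ≤ 1) : IsStochastic (bscBit ξ) :=
  ⟨fun c b => by unfold bscBit; split_ifs <;> linarith,
    fun c => by cases c <;> simp [bscBit]⟩

noncomputable def bscEntropyGap (ξ t : ℝ) : ℝ :=
  binEntropy (ξ + (1 - 2 * ξ) * t) - (1 - 2 * ξ) ^ 2 * binEntropy t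

lemma hasDerivAt_log_one_sub_sub_log {t : ℝ} (h0 : t ≠ 0) (h1 : t ≠ 1) :
    HasDerivAt (fun t => log (1 - t) - log t) (-(t * (1 - t))⁻¹) t := by
  have h1' : 1 - t ≠ 0 := sub_ne_zero.2 (Ne.symm h1)
  refine ((((hasDerivAt_id t).const_sub 1).log h1').sub (hasDerivAt_log h0)).congr_deriv ?_
  simp only [id]
  field_simp
  ring

lemma convexOn_bscEntropyGap {ξ : ℝ} (hξ0 : 0 ≤ ξ) (hξ1 : ξ ≤ 1) :
    ConvexOn ℝ (Set.Icc 0 1) (bscEntropyGap ξ) := by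
  set η := 1 - 2 * ξ
  -- `s(1 - s) - t(1 - t) = 4ξ(1 - ξ)(t - 1/2)²` for `s = ξ + η t`
  have hvar {t : ℝ} (ht : t ∈ Set.Ioo (0 : ℝ) 1) :
      0 < t * (1 - t) ∧ t * (1 - t) ≤ (ξ + η * t) * (1 - (ξ + η * t)) :=
    ⟨by nlinarith [ht.1, ht.2],
      by nlinarith [mul_nonneg hξ0 (sub_nonneg.2 hξ1), sq_nonneg (2 * t - 1)]⟩
  have hne {t : ℝ} (ht : t ∈ Set.Ioo (0 : ℝ) 1) : ξ + η * t ≠ 0 ∧ ξ + η * t ≠ 1 := by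
    have h := (hvar ht).1.trans_le (hvar ht).2
    constructor <;> rintro h' <;> simp [h'] at h
  have haff (t : ℝ) : HasDerivAt (fun t => ξ + η * t) η t := by
    simpa using ((hasDerivAt_id t).const_mul η).const_add ξ
  refine convexOn_of_hasDerivWithinAt2_nonneg (convex_Icc 0 1)
    (f' := fun t => (log (1 - (ξ + η * t)) - log (ξ + η * t)) * η
      - η ^ 2 * (log (1 - t) - log t))
    (f'' := fun t => -((ξ + η * t) * (1 - (ξ + η * t)))⁻¹ * η * η
      - η ^ 2 * -(t * (1 - t))⁻¹)
    (by unfold bscEntropyGap; fun_prop) ?_ ?_ ?_ <;> rw [interior_Icc]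
  · intro t ht
    exact (((hasDerivAt_binEntropy (hne ht).1 (hne ht).2).comp t (haff t)).sub
      ((hasDerivAt_binEntropy ht.1.ne' ht.2.ne).const_mul _)).hasDerivWithinAt
  · intro t ht
    exact ((((hasDerivAt_log_one_sub_sub_log (hne ht).1 (hne ht).2).comp t (haff t)).mul_const
      η).sub ((hasDerivAt_log_one_sub_sub_log ht.1.ne' ht.2.ne).const_mul _)).hasDerivWithinAt
  · intro t ht
    have h := inv_anti₀ (hvar ht).1 (hvar ht).2
    nlinarith [sq_nonneg η]

end BinarySymmetricChannel

section StrongDataProcessing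

variable {α β : Type*} [Fintype α] {ξ : ℝ}

lemma weightedMutInfo_bool (q : α × Bool → ℝ) (hq : ∀ z, 0 ≤ q z) :
    weightedMutInfo q = perspective binEntropy (∑ x, q (x, false)) (∑ x, q (x, true))
      - ∑ x, perspective binEntropy (q (x, false)) (q (x, true)) := by
  rw [perspective_binEntropy (Finset.sum_nonneg fun x _ => hq _)
    (Finset.sum_nonneg fun x _ => hq _)]
  simp only [perspective_binEntropy (hq _) (hq _), weightedMutInfo, mutInfo,
    ent_eq_sum_negMulLog, Fintype.sum_prod_type, Fintype.sum_bool, Finset.sum_add_distrib,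
    Finset.sum_sub_distrib, add_comm (q (_, true))]
  ring

theorem weightedMutInfo_applyChannel_bscBit_le (hξ0 : 0 ≤ ξ) (hξ1 : ξ ≤ 1)
    (q : α × Bool → ℝ) (hq : ∀ z, 0 ≤ q z) :
    weightedMutInfo (applyChannel q (bscBit ξ)) ≤ (1 - 2 * ξ) ^ 2 * weightedMutInfo q := by
  have hfalse (x : α) : applyChannel q (bscBit ξ) (x, false)
      = (1 - ξ) * q (x, false) + ξ * q (x, true) := by
    simp [applyChannel, bscBit]
    ring
  have htrue (x : α) : applyChannel q (bscBit ξ) (x, true)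
      = ξ * q (x, false) + (1 - ξ) * q (x, true) := by
    simp [applyChannel, bscBit]
    ring
  have hgap (u v : ℝ) : perspective (bscEntropyGap ξ) u v
      = perspective (fun t => binEntropy (ξ + (1 - 2 * ξ) * t)) u v
        - (1 - 2 * ξ) ^ 2 * perspective binEntropy u v := by
    unfold perspective bscEntropyGap
    ring
  have hsub := perspective_sum_le (convexOn_bscEntropyGap hξ0 hξ1) Finset.univ
    (u := fun x => q (x, false)) (v := fun x => q (x, true)) (fun _ => hq _) (fun _ => hq _)
  rw [weightedMutInfo_bool _ (applyChannel_nonneg hq (isStochastic_bscBit hξ0 hξ1)),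
    weightedMutInfo_bool q hq]
  simp only [hfalse, htrue, Finset.sum_add_distrib, ← Finset.mul_sum, perspective_bsc]
  simp only [hgap, Finset.sum_sub_distrib, ← Finset.mul_sum] at hsub
  linarith

/-- The conditional form `I(X; Y₁ | W) ≤ (1 - 2ξ)² I(X; Z₁ | W)` for `Y₁ = BSC(ξ)(Z₁)`. -/
theorem mutInfo_applyChannelFst_bscBit_sub_le [Fintype β] (hξ0 : 0 ≤ ξ) (hξ1 : ξ ≤ 1)
    (p : α × Bool × β → ℝ) (hp : ∀ z, 0 ≤ p z) :
    mutInfo (applyChannelFst p (bscBit ξ)) - mutInfo (outSndMarginal p)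
      ≤ (1 - 2 * ξ) ^ 2 * (mutInfo p - mutInfo (outSndMarginal p)) := by
  have h := mutInfo_sub_mutInfo_outSndMarginal (applyChannelFst p (bscBit ξ))
  rw [outSndMarginal_applyChannelFst p (isStochastic_bscBit hξ0 hξ1)] at h
  rw [h, mutInfo_sub_mutInfo_outSndMarginal, Finset.mul_sum]
  refine Finset.sum_le_sum fun w _ => ?_
  have hslice : (fun xz : α × Bool => applyChannelFst p (bscBit ξ) (xz.1, xz.2, w))
      = applyChannel (fun xz => p (xz.1, xz.2, w)) (bscBit ξ) := rfl
  rw [hslice]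
  exact weightedMutInfo_applyChannel_bscBit_le hξ0 hξ1 _ fun _ => hp _

end StrongDataProcessing

section Tensorization

variable {α β : Type*} {ξ : ℝ}

lemma bscChannel_eq_prod {m : ℕ} (y z : Fin m → Bool) :
    bscChannel ξ y z = ∏ i, bscBit ξ (y i) (z i) := by
  have hcard := Finset.card_filter_add_card_filter_not (s := Finset.univ) fun i => y i = z i
  have hdist : hammingDist y z = (Finset.univ.filter fun i => ¬y i = z i).card := rfl
  unfold bscBit
  rw [Finset.prod_ite]
  simp only [Finset.prod_const, Finset.card_univ, Fintype.card_fin] at hcard ⊢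
  rw [bscChannel, mul_comm, hdist, show (Finset.univ.filter fun i => y i = z i).card
    = m - (Finset.univ.filter fun i => ¬y i = z i).card by omega]

lemma isStochastic_bscChannel (hξ0 : 0 ≤ ξ) (hξ1 : ξ ≤ 1) (m : ℕ) :
    IsStochastic (bscChannel ξ (n := m)) where
  nonneg y z := mul_nonneg (pow_nonneg hξ0 _) (pow_nonneg (sub_nonneg.2 hξ1) _)
  sum_eq_one y := by
    simp only [bscChannel_eq_prod, ← Fintype.prod_sum, (isStochastic_bscBit hξ0 hξ1).sum_eq_one,
      Finset.prod_const_one]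

lemma bscChannel_cons {m : ℕ} (c b : Bool) (y z : Fin m → Bool) :
    bscChannel ξ (Fin.cons c y : Fin (m + 1) → Bool) (Fin.cons b z)
      = bscBit ξ c b * bscChannel ξ y z := by
  simp [bscChannel_eq_prod, Fin.prod_univ_succ]

lemma applyChannel_bscChannel_cons {m : ℕ} (q : α × (Fin (m + 1) → Bool) → ℝ) (x : α) (b : Bool)
    (y : Fin m → Bool) :
    applyChannel q (bscChannel ξ) (x, Fin.cons b y)
      = applyChannelFst (applyChannelSnd (fun xz => q (xz.1, Fin.cons xz.2.1 xz.2.2))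
          (bscChannel ξ)) (bscBit ξ) (x, b, y) := by
  simp only [applyChannel, applyChannelFst, applyChannelSnd, Finset.sum_mul]
  rw [← (Fin.consEquiv fun _ => Bool).sum_comp, Fintype.sum_prod_type]
  refine Finset.sum_congr rfl fun c _ => Finset.sum_congr rfl fun z _ => ?_
  change q (x, Fin.cons c z) * bscChannel ξ (Fin.cons c z : Fin (m + 1) → Bool) (Fin.cons b y) = _
  rw [bscChannel_cons]
  ring

lemma mutInfo_applyChannel_bscChannel_succ [Fintype α] {m : ℕ}
    (q : α × (Fin (m + 1) → Bool) → ℝ) :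
    mutInfo (applyChannel q (bscChannel ξ))
      = mutInfo (applyChannelFst (applyChannelSnd (fun xz => q (xz.1, Fin.cons xz.2.1 xz.2.2))
          (bscChannel ξ)) (bscBit ξ)) := by
  rw [← mutInfo_comp_equiv (Fin.consEquiv fun _ => Bool)]
  congr 1
  funext xz
  exact applyChannel_bscChannel_cons q xz.1 xz.2.1 xz.2.2

lemma bscContraction_mem_Icc (hξ0 : 0 ≤ ξ) (hξ1 : ξ ≤ 1) :
    4 * ξ - 4 * ξ ^ 2 ∈ Set.Icc (0 : ℝ) 1 :=
  ⟨by nlinarith, by nlinarith [sq_nonneg (1 - 2 * ξ)]⟩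

lemma one_sub_bscContraction_pow_nonneg (hξ0 : 0 ≤ ξ) (hξ1 : ξ ≤ 1) (m : ℕ) :
    0 ≤ 1 - (4 * ξ - 4 * ξ ^ 2) ^ m :=
  sub_nonneg.2 (pow_le_one₀ (bscContraction_mem_Icc hξ0 hξ1).1 (bscContraction_mem_Icc hξ0 hξ1).2)

/-- The Evans–Schulman bound for `m` independent binary symmetric channels. -/
theorem mutInfo_applyChannel_bscChannel_le [Fintype α] (hξ0 : 0 ≤ ξ) (hξ1 : ξ ≤ 1) :
    ∀ {m : ℕ} (q : α × (Fin m → Bool) → ℝ), (∀ z, 0 ≤ q z) → ∑ z, q z = 1 →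
      mutInfo (applyChannel q (bscChannel ξ)) ≤ (1 - (4 * ξ - 4 * ξ ^ 2) ^ m) * mutInfo q
  | 0, q, _, hq1 => by
    rw [mutInfo_of_unique _ ((sum_applyChannel q (isStochastic_bscChannel hξ0 hξ1 0)).trans hq1)]
    simp
  | m + 1, q, hq, hq1 => by
    have hK := isStochastic_bscChannel hξ0 hξ1 m
    set θ := 4 * ξ - 4 * ξ ^ 2
    set e := Fin.consEquiv fun _ : Fin (m + 1) => Bool
    set q' : α × Bool × (Fin m → Bool) → ℝ := fun xz => q (xz.1, Fin.cons xz.2.1 xz.2.2)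
    have hq' (z : α × Bool × (Fin m → Bool)) : 0 ≤ q' z := hq _
    have hq'1 : ∑ z, q' z = 1 :=
      (Fintype.sum_equiv ((Equiv.refl α).prodCongr e) _ _ fun _ => rfl).trans hq1
    have hI' : mutInfo q' = mutInfo q := mutInfo_comp_equiv e q
    set s := applyChannelSnd q' (bscChannel ξ)
    have hwire := mutInfo_applyChannelFst_bscBit_sub_le hξ0 hξ1 s (applyChannelSnd_nonneg hq' hK)
    have hrest : mutInfo (outSndMarginal s) ≤ (1 - θ ^ m) * mutInfo q := by
      rw [outSndMarginal_applyChannelSnd, ← hI']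
      calc _ ≤ (1 - θ ^ m) * mutInfo (outSndMarginal q') :=
            mutInfo_applyChannel_bscChannel_le hξ0 hξ1 _
              (fun _ => Finset.sum_nonneg fun _ _ => hq' _) ((sum_outSndMarginal q').trans hq'1)
        _ ≤ (1 - θ ^ m) * mutInfo q' :=
            mul_le_mul_of_nonneg_left (mutInfo_outSndMarginal_le q' hq')
              (one_sub_bscContraction_pow_nonneg hξ0 hξ1 m)
    have hall : mutInfo s ≤ mutInfo q := hI' ▸ mutInfo_applyChannelSnd_le q' hq' hK
    obtain ⟨hθ0, hθ1⟩ := bscContraction_mem_Icc hξ0 hξ1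
    rw [mutInfo_applyChannel_bscChannel_succ]
    calc _ ≤ θ * mutInfo (outSndMarginal s) + (1 - θ) * mutInfo s := by
          rw [show (1 - 2 * ξ) ^ 2 = 1 - θ by ring] at hwire
          linarith
      _ ≤ θ * ((1 - θ ^ m) * mutInfo q) + (1 - θ) * mutInfo q := by gcongr
      _ = (1 - θ ^ (m + 1)) * mutInfo q := by ring

theorem mutInfo_applyChannel_bscChannel_comp_le [Fintype α] [Fintype β] (hξ0 : 0 ≤ ξ)
    (hξ1 : ξ ≤ 1) {m : ℕ} (g : β → Fin m → Bool) (p : α × β → ℝ) (hp : ∀ z, 0 ≤ p z)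
    (hp1 : ∑ z, p z = 1) :
    mutInfo (applyChannel p fun b => bscChannel ξ (g b))
      ≤ (1 - (4 * ξ - 4 * ξ ^ 2) ^ m) * mutInfo p := by
  have hK := isStochastic_detKernel g
  rw [← applyChannel_applyChannel_detKernel]
  calc _ ≤ (1 - (4 * ξ - 4 * ξ ^ 2) ^ m) * mutInfo (applyChannel p (detKernel g)) :=
        mutInfo_applyChannel_bscChannel_le hξ0 hξ1 _ (applyChannel_nonneg hp hK)
          ((sum_applyChannel p hK).trans hp1)
    _ ≤ _ := mul_le_mul_of_nonneg_left (mutInfo_applyChannel_le p hp hK)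
          (one_sub_bscContraction_pow_nonneg hξ0 hξ1 m)

end Tensorization

section Network

variable {α : Type*} (ξ : ℝ) (n : ℕ → ℕ) (f0 : α → (Fin (n 0) → Bool))
  (f : ∀ k : ℕ, (Fin (n k) → Bool) → (Fin (n (k + 1)) → Bool)) (μ : α → ℝ)

/-- The probability of the input `x` together with the post-noise outputs `y` of the layers
`0, …, M`. -/
noncomputable def trajWeight {M : ℕ} (x : α) (y : ∀ ℓ : Fin (M + 1), Fin (n ℓ.val) → Bool) : ℝ :=
  μ x * ∏ ℓ, bscChannel ξ (preAct n f0 f x y ℓ) (y ℓ)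

noncomputable def outputJoint (M : ℕ) : α × (Fin (n M) → Bool) → ℝ := fun xz =>
  ∑ y : ∀ ℓ : Fin (M + 1), Fin (n ℓ.val) → Bool,
    if y (Fin.last M) = xz.2 then trajWeight ξ n f0 f μ xz.1 y else 0

lemma preAct_snoc_castSucc {M : ℕ} (x : α) (y : ∀ ℓ : Fin (M + 1), Fin (n ℓ.val) → Bool)
    (w : Fin (n (M + 1)) → Bool) (i : Fin (M + 1)) :
    preAct n f0 f x (Fin.snoc (α := fun ℓ : Fin (M + 2) => Fin (n ℓ.val) → Bool) y w)
      i.castSucc = preAct n f0 f x y i := by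
  obtain ⟨_ | j, hj⟩ := i
  · rfl
  · exact congrArg (f j) (Fin.snoc_castSucc (α := fun ℓ : Fin (M + 2) => Fin (n ℓ.val) → Bool)
      (i := ⟨j, by omega⟩) w y)

lemma preAct_snoc_last {M : ℕ} (x : α) (y : ∀ ℓ : Fin (M + 1), Fin (n ℓ.val) → Bool)
    (w : Fin (n (M + 1)) → Bool) :
    preAct n f0 f x (Fin.snoc (α := fun ℓ : Fin (M + 2) => Fin (n ℓ.val) → Bool) y w)
      (Fin.last (M + 1)) = f M (y (Fin.last M)) :=
  congrArg (f M) (Fin.snoc_castSucc (α := fun ℓ : Fin (M + 2) => Fin (n ℓ.val) → Bool)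
    (i := Fin.last M) w y)

lemma trajWeight_snoc {M : ℕ} (x : α) (y : ∀ ℓ : Fin (M + 1), Fin (n ℓ.val) → Bool)
    (w : Fin (n (M + 1)) → Bool) :
    trajWeight ξ n f0 f μ x (Fin.snoc (α := fun ℓ : Fin (M + 2) => Fin (n ℓ.val) → Bool) y w)
      = trajWeight ξ n f0 f μ x y * bscChannel ξ (f M (y (Fin.last M))) w := by
  unfold trajWeight
  rw [Fin.prod_univ_castSucc, preAct_snoc_last]
  simp only [preAct_snoc_castSucc, Fin.snoc_castSucc, Fin.snoc_last, mul_assoc]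

lemma outputJoint_zero [Fintype α] [DecidableEq α] :
    outputJoint ξ n f0 f μ 0 = applyChannel (diagJoint μ) fun x => bscChannel ξ (f0 x) := by
  funext xz
  have h := Fintype.sum_equiv (Equiv.piUnique fun ℓ : Fin 1 => Fin (n ℓ.val) → Bool)
    (fun y => if y (Fin.last 0) = xz.2 then trajWeight ξ n f0 f μ xz.1 y else 0)
    (fun w => if w = xz.2 then μ xz.1 * bscChannel ξ (f0 xz.1) w else 0)
    fun y => by simp [trajWeight]; rfl
  simp only [outputJoint, h, Finset.sum_ite_eq', Finset.mem_univ, if_true]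
  simp [applyChannel, diagJoint]

lemma outputJoint_succ (M : ℕ) :
    outputJoint ξ n f0 f μ (M + 1)
      = applyChannel (outputJoint ξ n f0 f μ M) fun v => bscChannel ξ (f M v) := by
  funext ⟨x, z⟩
  calc outputJoint ξ n f0 f μ (M + 1) (x, z)
      = ∑ wy : (Fin (n (M + 1)) → Bool) × (∀ ℓ : Fin (M + 1), Fin (n ℓ.val) → Bool),
          if wy.1 = z then
            trajWeight ξ n f0 f μ x wy.2 * bscChannel ξ (f M (wy.2 (Fin.last M))) wy.1
          else 0 := by
        rw [outputJoint, ← (Fin.snocEquiv fun ℓ : Fin (M + 2) => Fin (n ℓ.val) → Bool).sum_comp]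
        refine Finset.sum_congr rfl fun wy _ => ?_
        change (if Fin.snoc (α := fun ℓ : Fin (M + 2) => Fin (n ℓ.val) → Bool) wy.2 wy.1
          (Fin.last (M + 1)) = z then trajWeight ξ n f0 f μ x
            (Fin.snoc (α := fun ℓ : Fin (M + 2) => Fin (n ℓ.val) → Bool) wy.2 wy.1) else 0) = _
        rw [Fin.snoc_last, trajWeight_snoc]
    _ = ∑ y : ∀ ℓ : Fin (M + 1), Fin (n ℓ.val) → Bool,
          trajWeight ξ n f0 f μ x y * bscChannel ξ (f M (y (Fin.last M))) z := by
        rw [Fintype.sum_prod_type, Finset.sum_comm]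
        simp
    _ = applyChannel (outputJoint ξ n f0 f μ M) (fun v => bscChannel ξ (f M v)) (x, z) := by
        simp only [applyChannel, outputJoint, Finset.sum_mul, ite_mul, zero_mul]
        rw [Finset.sum_comm]
        simp

lemma outputJoint_nonneg (hξ0 : 0 ≤ ξ) (hξ1 : ξ ≤ 1) (hμ : ∀ x, 0 ≤ μ x) (M : ℕ)
    (z : α × (Fin (n M) → Bool)) : 0 ≤ outputJoint ξ n f0 f μ M z :=
  Finset.sum_nonneg fun y _ => by
    unfold trajWeight
    split_ifs
    · exact mul_nonneg (hμ _) (Finset.prod_nonneg fun ℓ _ =>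
        (isStochastic_bscChannel hξ0 hξ1 _).nonneg _ _)
    · exact le_rfl

lemma sum_outputJoint [Fintype α] (hξ0 : 0 ≤ ξ) (hξ1 : ξ ≤ 1) (hμ : ∑ x, μ x = 1) :
    ∀ M, ∑ z, outputJoint ξ n f0 f μ M z = 1
  | 0 => by
    classical
    rw [outputJoint_zero, sum_applyChannel _ ((isStochastic_bscChannel hξ0 hξ1 _).comp f0),
      sum_diagJoint, hμ]
  | M + 1 => by
    rw [outputJoint_succ, sum_applyChannel _ ((isStochastic_bscChannel hξ0 hξ1 _).comp (f M))]
    exact sum_outputJoint hξ0 hξ1 hμ M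

theorem mutInfo_outputJoint_le [Fintype α] (hξ0 : 0 ≤ ξ) (hξ1 : ξ ≤ 1) (hμ0 : ∀ x, 0 ≤ μ x)
    (hμ1 : ∑ x, μ x = 1) : ∀ M, mutInfo (outputJoint ξ n f0 f μ M)
      ≤ (∏ ℓ : Fin (M + 1), (1 - (4 * ξ - 4 * ξ ^ 2) ^ (n ℓ.val))) * ent μ
  | 0 => by
    classical
    rw [outputJoint_zero, Fin.prod_univ_one]
    exact (mutInfo_applyChannel_bscChannel_comp_le hξ0 hξ1 _ _ (diagJoint_nonneg hμ0)
      ((sum_diagJoint μ).trans hμ1)).trans (mul_le_mul_of_nonneg_left (mutInfo_diagJoint_le hμ0)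
        (one_sub_bscContraction_pow_nonneg hξ0 hξ1 _))
  | M + 1 => by
    rw [outputJoint_succ, Fin.prod_univ_castSucc, mul_comm _ (1 - _), mul_assoc]
    exact (mutInfo_applyChannel_bscChannel_comp_le hξ0 hξ1 _ _
      (outputJoint_nonneg ξ n f0 f μ hξ0 hξ1 hμ0 M)
      (sum_outputJoint ξ n f0 f μ hξ0 hξ1 hμ1 M)).trans
      (mul_le_mul_of_nonneg_left (mutInfo_outputJoint_le hξ0 hξ1 hμ0 hμ1 M)
        (one_sub_bscContraction_pow_nonneg hξ0 hξ1 _))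

end Network

theorem stmt7 {α : Type*} [Fintype α] (L : ℕ) (hL : 0 < L) (n : ℕ → ℕ)
    (f0 : α → (Fin (n 0) → Bool))
    (f : ∀ k : ℕ, (Fin (n k) → Bool) → (Fin (n (k + 1)) → Bool))
    (ξ : ℝ) (hξ0 : 0 ≤ ξ) (hξ : ξ < 1 / 2)
    (μ : α → ℝ) (hμ0 : ∀ x, 0 ≤ μ x) (hμ1 : ∑ x, μ x = 1) :
    mutInfo (fun xz : α × (Fin (n (L - 1)) → Bool) =>
        ∑ y : ∀ ℓ : Fin L, Fin (n ℓ.val) → Bool,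
          if y ⟨L - 1, Nat.sub_lt hL one_pos⟩ = xz.2 then
            μ xz.1 * ∏ ℓ : Fin L, bscChannel ξ (preAct n f0 f xz.1 y ℓ) (y ℓ)
          else 0)
      ≤ (∏ ℓ : Fin L, (1 - (4 * ξ - 4 * ξ ^ 2) ^ (n ℓ.val))) * ent μ := by
  obtain ⟨M, rfl⟩ : ∃ M, L = M + 1 := ⟨L - 1, by omega⟩
  -- the joint law in the statement unfolds to `outputJoint ξ n f0 f μ M`
  exact mutInfo_outputJoint_le ξ n f0 f μ hξ0 (by linarith) hμ0 hμ1 M
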